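/- For every r > s > 1/2 there exists a constant C_{r,s} > 0, independent of f, g, and M, such that for all 1-periodic f, g ∈ H^r([0,1)), the discrete inner product ⟨f,g⟩_M = (1/M) ∑_{m=1}^{M} conj(f(x_m)) g(x_m) over equispaced points x_m = x̃ + m/M satisfies |⟨f,g⟩ − ⟨f,g⟩_M| ≤ C_{r,s} M^{−r} (‖f‖_{H^r} ‖g‖_{H^s} + ‖f‖_{H^s} ‖g‖_{H^r}), where ⟨f,g⟩ = ∫_0^1 conj(f) g. -/

import Mathlib

open Complex

def InSobolev (s : ℝ) (c : ℤ → ℂ) : Prop :=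
  Summable fun m : {m : ℤ // m ≠ 0} => |(m.1 : ℝ)| ^ (2 * s) * ‖c m.1‖ ^ 2

noncomputable def sobolevNorm (s : ℝ) (c : ℤ → ℂ) : ℝ :=
  Real.sqrt (‖c 0‖ ^ 2 + ∑' m : {m : ℤ // m ≠ 0}, |(m.1 : ℝ)| ^ (2 * s) * ‖c m.1‖ ^ 2)

/-!
Expand `f = ∑ a_k e_k` and `g = ∑ b_k e_k`, `e_k x = exp (2πikx)`; the coefficients are absolutely
summable because `s > 1/2`. Then `⟨f, g⟩ = ∑ conj (a_k) b_k`, while the equispaced rule averages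
`e_d` to `e_d x̃` when `M ∣ d` and to `0` otherwise, so the discrete product is
`∑_{k, j} conj (a_k) b_{k+jM} e_{jM} x̃`, and the error is the aliasing sum over `j ≠ 0`.

With `⟨k⟩ = max 1 |k|`: for an aliasing pair with `|k| ≤ |k + jM|` we get `M |j| ≤ 2 ⟨k + jM⟩`,
so `|a_k| |b_{k+jM}| ≤ (2/M)^r · ⟨k⟩^s |a_k| ⟨j⟩^{-r} · ⟨k⟩^{-s} ⟨k + jM⟩^r |b_{k+jM}|`.
Cauchy–Schwarz over `(k, j)` bounds the sum by `C M^{-r} ‖f‖_s ‖g‖_r`: the first square sum is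
`‖f‖_s² ∑_j ⟨j⟩^{-2r}`, and in the second, for a fixed frequency `l = k + jM`, the `k = l - jM` are
distinct, so it is at most `∑_n ⟨n⟩^{-2s} ‖g‖_r²`. The pairs with `|k + jM| ≤ |k|` are the same
estimate with `f` and `g` exchanged.
-/

open ComplexConjugate

noncomputable section

lemma summable_mul_of_summable_sq {ι : Type*} {f g : ι → ℝ} (hf : Summable fun i => f i ^ 2)
    (hg : Summable fun i => g i ^ 2) : Summable fun i => f i * g i :=
  ((hf.add hg).div_const 2).of_norm_bounded fun i => by
    rw [Real.norm_eq_abs, abs_mul]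
    nlinarith [two_mul_le_add_sq |f i| |g i|, sq_abs (f i), sq_abs (g i)]

lemma tsum_mul_le_of_tsum_sq_le {ι : Type*} {f g : ι → ℝ} {A B : ℝ}
    (hf : Summable fun i => f i ^ 2) (hg : Summable fun i => g i ^ 2) (hA : 0 ≤ A) (hB : 0 ≤ B)
    (hfA : ∑' i, f i ^ 2 ≤ A ^ 2) (hgB : ∑' i, g i ^ 2 ≤ B ^ 2) :
    ∑' i, f i * g i ≤ A * B := by
  refine (summable_mul_of_summable_sq hf hg).tsum_le_of_sum_le fun u => ?_
  calc ∑ i ∈ u, f i * g i ≤ √(∑ i ∈ u, f i ^ 2) * √(∑ i ∈ u, g i ^ 2) :=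
        Real.sum_mul_le_sqrt_mul_sqrt u f g
    _ ≤ √(A ^ 2) * √(B ^ 2) := by
        gcongr
        · exact (hf.sum_le_tsum u fun i _ => sq_nonneg _).trans hfA
        · exact (hg.sum_le_tsum u fun i _ => sq_nonneg _).trans hgB
    _ = A * B := by rw [Real.sqrt_sq hA, Real.sqrt_sq hB]

lemma tsum_indicator_snd_eq {α β E : Type*} [AddCommMonoid E] [TopologicalSpace E] (b : β)
    (h : α × β → E) : ∑' p, {p : α × β | p.2 = b}.indicator h p = ∑' a, h (a, b) := by
  have hinj : Function.Injective fun a : α => (a, b) := fun a a' h => (Prod.mk.inj h).1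
  rw [← hinj.tsum_eq]
  · simp
  · intro p hp
    by_cases hb : p.2 = b
    · exact ⟨p.1, by rw [← hb]⟩
    · simp [hb] at hp

lemma tsum_ite_dvd_snd {α E : Type*} [AddCommMonoid E] [TopologicalSpace E] {M : ℤ} (hM : M ≠ 0)
    (h : α × ℤ → E) :
    ∑' p : α × ℤ, (if M ∣ p.2 then h p else 0) = ∑' p : α × ℤ, h (p.1, p.2 * M) := by
  have hinj : Function.Injective fun p : α × ℤ => (p.1, p.2 * M) := fun p q h => by
    simp only [Prod.mk.injEq, mul_left_inj' hM] at h
    exact Prod.ext h.1 h.2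
  rw [← hinj.tsum_eq]
  · simp
  · intro p hp
    by_cases hd : M ∣ p.2
    · obtain ⟨j, hj⟩ := hd
      exact ⟨(p.1, j), Prod.ext rfl (hj.trans (mul_comm _ _)).symm⟩
    · simp [hd] at hp

/-! ### Sobolev weights -/

def sobolevWeight (k : ℤ) : ℝ := max 1 |(k : ℝ)|

lemma one_le_sobolevWeight (k : ℤ) : 1 ≤ sobolevWeight k := le_max_left _ _

lemma sobolevWeight_pos (k : ℤ) : 0 < sobolevWeight k :=
  one_pos.trans_le (one_le_sobolevWeight k)

lemma sobolevWeight_rpow_pos (k : ℤ) (t : ℝ) : 0 < sobolevWeight k ^ t :=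
  Real.rpow_pos_of_pos (sobolevWeight_pos k) t

lemma abs_le_sobolevWeight (k : ℤ) : |(k : ℝ)| ≤ sobolevWeight k := le_max_right _ _

@[simp]
lemma sobolevWeight_zero : sobolevWeight 0 = 1 := by simp [sobolevWeight]

lemma sobolevWeight_of_ne_zero {k : ℤ} (hk : k ≠ 0) : sobolevWeight k = |(k : ℝ)| :=
  max_eq_right (by exact_mod_cast Int.one_le_abs hk)

lemma sobolevWeight_rpow_sq (k : ℤ) (t : ℝ) :
    (sobolevWeight k ^ t) ^ 2 = sobolevWeight k ^ (2 * t) := by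
  rw [← Real.rpow_mul_natCast (sobolevWeight_pos k).le, mul_comm]
  norm_num

lemma summable_sobolevWeight_rpow_neg {t : ℝ} (ht : 1 < t) :
    Summable fun k => sobolevWeight k ^ (-t) :=
  (Real.summable_abs_int_rpow ht).congr_cofinite <|
    (Filter.eventually_cofinite_ne 0).mono fun k hk => by simp only [sobolevWeight_of_ne_zero hk]

def sobolevWeightSum (t : ℝ) : ℝ := ∑' k, sobolevWeight k ^ (-t)

lemma one_le_sobolevWeightSum {t : ℝ} (ht : 1 < t) : 1 ≤ sobolevWeightSum t := by
  simpa [sobolevWeightSum] using (summable_sobolevWeight_rpow_neg ht).le_tsum 0 fun k _ =>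
    (sobolevWeight_rpow_pos k _).le

lemma sobolevNorm_nonneg (s : ℝ) (c : ℤ → ℂ) : 0 ≤ sobolevNorm s c := Real.sqrt_nonneg _

lemma hasSum_sobolevNorm_sq {s : ℝ} {c : ℤ → ℂ} (hc : InSobolev s c) :
    HasSum (fun k => sobolevWeight k ^ (2 * s) * ‖c k‖ ^ 2) (sobolevNorm s c ^ 2) := by
  have hzero : HasSum (fun k : ℤ => if k = 0 then ‖c 0‖ ^ 2 else 0) (‖c 0‖ ^ 2) :=
    hasSum_ite_eq 0 _
  have hrest := (hasSum_subtype_iff_indicator (s := {k : ℤ | k ≠ 0})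
    (f := fun k : ℤ => |(k : ℝ)| ^ (2 * s) * ‖c k‖ ^ 2)).1 hc.hasSum
  rw [sobolevNorm, Real.sq_sqrt (add_nonneg (sq_nonneg _) (tsum_nonneg fun _ => by positivity))]
  refine (hzero.add hrest).congr_fun fun k => ?_
  rcases eq_or_ne k 0 with rfl | hk
  · simp
  · simp [hk, sobolevWeight_of_ne_zero hk]

lemma InSobolev.mono {s r : ℝ} (hsr : s ≤ r) {c : ℤ → ℂ} (hc : InSobolev r c) :
    InSobolev s c :=
  hc.of_nonneg_of_le (fun _ => by positivity) fun m => by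
    gcongr
    exact_mod_cast Int.one_le_abs m.2

lemma InSobolev.summable_norm {s : ℝ} (hs : 1 / 2 < s) {c : ℤ → ℂ} (hc : InSobolev s c) :
    Summable fun k => ‖c k‖ := by
  have hneg : Summable fun k => (sobolevWeight k ^ (-s)) ^ 2 := by
    simp_rw [sobolevWeight_rpow_sq, ← neg_mul_eq_mul_neg]
    exact summable_sobolevWeight_rpow_neg (by linarith)
  have hpos : Summable fun k => (sobolevWeight k ^ s * ‖c k‖) ^ 2 := by
    simpa only [mul_pow, sobolevWeight_rpow_sq] using (hasSum_sobolevNorm_sq hc).summable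
  refine (summable_mul_of_summable_sq hneg hpos).congr fun k => ?_
  rw [← mul_assoc, ← Real.rpow_add (sobolevWeight_pos k), neg_add_cancel, Real.rpow_zero, one_mul]

/-! ### The aliasing sum -/

def aliasProd (a b : ℤ → ℂ) (M : ℕ) (p : ℤ × ℤ) : ℝ := ‖a p.1‖ * ‖b (p.1 + p.2 * M)‖

lemma aliasProd_nonneg (a b : ℤ → ℂ) (M : ℕ) (p : ℤ × ℤ) : 0 ≤ aliasProd a b M p := by
  unfold aliasProd; positivity

lemma summable_aliasProd {a b : ℤ → ℂ} (ha : Summable fun k => ‖a k‖)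
    (hb : Summable fun k => ‖b k‖) {M : ℕ} (hM : M ≠ 0) : Summable (aliasProd a b M) := by
  have hinj : Function.Injective fun p : ℤ × ℤ => (p.1, p.1 + p.2 * (M : ℤ)) := by
    rintro ⟨k, j⟩ ⟨k', j'⟩ h
    simp only [Prod.mk.injEq] at h
    obtain ⟨rfl, h⟩ := h
    simpa [hM] using h
  exact (ha.mul_of_nonneg hb (fun _ => norm_nonneg _) fun _ => norm_nonneg _).comp_injective hinj

lemma natCast_mul_sobolevWeight_le {M : ℕ} {k j : ℤ} (hj : j ≠ 0) (hkl : |k| ≤ |k + j * M|) :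
    (M : ℝ) * sobolevWeight j ≤ 2 * sobolevWeight (k + j * M) := by
  have h : (M : ℤ) * |j| ≤ 2 * |k + j * M| :=
    calc (M : ℤ) * |j| = |(k + j * M) - k| := by
          rw [add_sub_cancel_left, abs_mul, Nat.abs_cast, mul_comm]
      _ ≤ |k + j * M| + |k| := abs_sub _ _
      _ ≤ 2 * |k + j * M| := by linarith
  calc (M : ℝ) * sobolevWeight j = ((M * |j| : ℤ) : ℝ) := by
        rw [sobolevWeight_of_ne_zero hj]; push_cast; ring
    _ ≤ ((2 * |k + j * M| : ℤ) : ℝ) := by exact_mod_cast h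
    _ = 2 * |((k + j * M : ℤ) : ℝ)| := by push_cast; ring
    _ ≤ 2 * sobolevWeight (k + j * M) := by gcongr; exact abs_le_sobolevWeight _

lemma summable_and_tsum_shift_le {t : ℝ} (ht : 1 < t) {β : ℤ → ℝ} (hβ0 : ∀ l, 0 ≤ β l)
    (hβ : Summable β) {M : ℕ} (hM : M ≠ 0) :
    Summable (fun p : ℤ × ℤ => sobolevWeight p.1 ^ (-t) * β (p.1 + p.2 * M)) ∧
      ∑' p : ℤ × ℤ, sobolevWeight p.1 ^ (-t) * β (p.1 + p.2 * M)
        ≤ sobolevWeightSum t * ∑' l, β l := by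
  set H : ℤ × ℤ → ℝ := fun p => sobolevWeight p.1 ^ (-t) * β (p.1 + p.2 * M)
  let e : ℤ × ℤ ≃ ℤ × ℤ :=
    { toFun := fun q => (q.1 - q.2 * M, q.2)
      invFun := fun p => (p.1 + p.2 * M, p.2)
      left_inv := fun q => by simp
      right_inv := fun p => by simp }
  have hHe (l j : ℤ) : H (e (l, j)) = sobolevWeight (l - j * M) ^ (-t) * β l := by
    simp [H, e]
  have hinj (l : ℤ) : Function.Injective fun j : ℤ => l - j * M := fun j j' h => by
    simpa [hM] using h
  have hw := summable_sobolevWeight_rpow_neg ht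
  have hw0 : ∀ k, 0 ≤ sobolevWeight k ^ (-t) := fun k => (sobolevWeight_rpow_pos k _).le
  have hfib (l : ℤ) : Summable fun j => H (e (l, j)) := by
    simp_rw [hHe]
    exact (hw.comp_injective (hinj l)).mul_right (β l)
  have hfib_le (l : ℤ) : ∑' j, H (e (l, j)) ≤ sobolevWeightSum t * β l := by
    simp_rw [hHe]
    rw [tsum_mul_right]
    exact mul_le_mul_of_nonneg_right (tsum_comp_le_tsum_of_inj hw hw0 (hinj l)) (hβ0 l)
  have hHe0 : 0 ≤ H ∘ e := fun q => mul_nonneg (hw0 _) (hβ0 _)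
  have hsum : Summable (H ∘ e) :=
    (summable_prod_of_nonneg hHe0).2 ⟨hfib, (hβ.mul_left _).of_nonneg_of_le
      (fun l => tsum_nonneg fun j => hHe0 (l, j)) hfib_le⟩
  refine ⟨e.summable_iff.1 hsum, ?_⟩
  calc ∑' p, H p = ∑' q, (H ∘ e) q := (e.tsum_eq H).symm
    _ = ∑' l, ∑' j, H (e (l, j)) := hsum.tsum_prod' hfib
    _ ≤ ∑' l, sobolevWeightSum t * β l :=
        ((summable_prod_of_nonneg hHe0).1 hsum).2.tsum_le_tsum hfib_le (hβ.mul_left _)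
    _ = sobolevWeightSum t * ∑' l, β l := tsum_mul_left

def aliasConst (r s : ℝ) : ℝ :=
  2 ^ r * √(sobolevWeightSum (2 * r)) * √(sobolevWeightSum (2 * s))

lemma aliasConst_pos {r s : ℝ} (hr : 1 / 2 < r) (hs : 1 / 2 < s) : 0 < aliasConst r s := by
  have := one_le_sobolevWeightSum (t := 2 * r) (by linarith)
  have := one_le_sobolevWeightSum (t := 2 * s) (by linarith)
  unfold aliasConst
  positivity

lemma one_le_alias_factor {r : ℝ} (hr : 0 ≤ r) {M : ℕ} (hM : 0 < M) {k j : ℤ} (hj : j ≠ 0)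
    (hkl : |k| ≤ |k + j * M|) :
    1 ≤ 2 ^ r * (M : ℝ) ^ (-r) * (sobolevWeight j ^ (-r) * sobolevWeight (k + j * M) ^ r) := by
  have hMj : 0 < (M : ℝ) * sobolevWeight j := mul_pos (by positivity) (sobolevWeight_pos j)
  have hl := sobolevWeight_pos (k + j * M)
  calc 1 ≤ (2 * sobolevWeight (k + j * M) / (M * sobolevWeight j)) ^ r :=
        Real.one_le_rpow ((one_le_div hMj).2 (natCast_mul_sobolevWeight_le hj hkl)) hr
    _ = 2 ^ r * (M : ℝ) ^ (-r) * (sobolevWeight j ^ (-r) * sobolevWeight (k + j * M) ^ r) := by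
        have := sobolevWeight_rpow_pos j r
        have : (0 : ℝ) < (M : ℝ) ^ r := by positivity
        rw [Real.div_rpow (by positivity) hMj.le, Real.mul_rpow (by norm_num) hl.le,
          Real.mul_rpow (by positivity) (sobolevWeight_pos j).le, Real.rpow_neg (by positivity),
          Real.rpow_neg (sobolevWeight_pos j).le]
        field_simp

def aliasFactorLeft (a : ℤ → ℂ) (s r : ℝ) (p : ℤ × ℤ) : ℝ :=
  sobolevWeight p.1 ^ s * ‖a p.1‖ * sobolevWeight p.2 ^ (-r)

def aliasFactorRight (b : ℤ → ℂ) (s r : ℝ) (M : ℕ) (p : ℤ × ℤ) : ℝ :=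
  sobolevWeight p.1 ^ (-s) * (sobolevWeight (p.1 + p.2 * M) ^ r * ‖b (p.1 + p.2 * M)‖)

lemma mul_aliasFactor_nonneg (a b : ℤ → ℂ) (s r : ℝ) (M : ℕ) (p : ℤ × ℤ) :
    0 ≤ aliasFactorLeft a s r p * aliasFactorRight b s r M p := by
  have := sobolevWeight_rpow_pos p.1 s
  have := sobolevWeight_rpow_pos p.1 (-s)
  have := sobolevWeight_rpow_pos p.2 (-r)
  have := sobolevWeight_rpow_pos (p.1 + p.2 * M) r
  unfold aliasFactorLeft aliasFactorRight
  positivity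

lemma hasSum_aliasFactorLeft_sq {r s : ℝ} (hr : 1 / 2 < r) {a : ℤ → ℂ} (ha : InSobolev s a) :
    HasSum (fun p => aliasFactorLeft a s r p ^ 2)
      (sobolevNorm s a ^ 2 * sobolevWeightSum (2 * r)) := by
  have hw := summable_sobolevWeight_rpow_neg (t := 2 * r) (by linarith)
  have ha2 := hasSum_sobolevNorm_sq ha
  refine (ha2.mul hw.hasSum (ha2.summable.mul_of_nonneg hw
    (fun k => mul_nonneg (sobolevWeight_rpow_pos k _).le (sq_nonneg _))
    fun k => (sobolevWeight_rpow_pos k _).le)).congr_fun fun p => ?_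
  simp only [aliasFactorLeft, mul_pow, sobolevWeight_rpow_sq, mul_neg]

lemma summable_and_tsum_aliasFactorRight_sq_le {r s : ℝ} (hs : 1 / 2 < s) {b : ℤ → ℂ}
    (hb : InSobolev r b) {M : ℕ} (hM : M ≠ 0) :
    Summable (fun p => aliasFactorRight b s r M p ^ 2) ∧
      ∑' p, aliasFactorRight b s r M p ^ 2 ≤ sobolevWeightSum (2 * s) * sobolevNorm r b ^ 2 := by
  have hsq : (fun p => aliasFactorRight b s r M p ^ 2) = fun p : ℤ × ℤ =>
      sobolevWeight p.1 ^ (-(2 * s)) *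
        (sobolevWeight (p.1 + p.2 * M) ^ (2 * r) * ‖b (p.1 + p.2 * M)‖ ^ 2) := by
    funext p
    simp only [aliasFactorRight, mul_pow, sobolevWeight_rpow_sq, mul_neg]
  rw [hsq, ← (hasSum_sobolevNorm_sq hb).tsum_eq]
  exact summable_and_tsum_shift_le (by linarith)
    (fun l => mul_nonneg (sobolevWeight_rpow_pos l _).le (sq_nonneg _))
    (hasSum_sobolevNorm_sq hb).summable hM

lemma indicator_aliasProd_le_mul_aliasFactor {r : ℝ} (hr : 0 ≤ r) (s : ℝ) (a b : ℤ → ℂ)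
    {M : ℕ} (hM : 0 < M) (p : ℤ × ℤ) :
    {p : ℤ × ℤ | p.2 ≠ 0 ∧ |p.1| ≤ |p.1 + p.2 * M|}.indicator (aliasProd a b M) p
      ≤ 2 ^ r * (M : ℝ) ^ (-r) * (aliasFactorLeft a s r p * aliasFactorRight b s r M p) := by
  obtain ⟨k, j⟩ := p
  by_cases hp : (k, j) ∈ {p : ℤ × ℤ | p.2 ≠ 0 ∧ |p.1| ≤ |p.1 + p.2 * M|}
  · rw [Set.indicator_of_mem hp]
    have hFG : aliasFactorLeft a s r (k, j) * aliasFactorRight b s r M (k, j)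
        = sobolevWeight j ^ (-r) * sobolevWeight (k + j * M) ^ r * aliasProd a b M (k, j) := by
      have := sobolevWeight_rpow_pos k s
      simp only [aliasFactorLeft, aliasFactorRight, aliasProd,
        Real.rpow_neg (sobolevWeight_pos _).le]
      field_simp
    calc aliasProd a b M (k, j) = 1 * aliasProd a b M (k, j) := (one_mul _).symm
      _ ≤ 2 ^ r * (M : ℝ) ^ (-r) * (sobolevWeight j ^ (-r) * sobolevWeight (k + j * M) ^ r)
            * aliasProd a b M (k, j) :=
          mul_le_mul_of_nonneg_right (one_le_alias_factor hr hM hp.1 hp.2)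
            (aliasProd_nonneg a b M _)
      _ = _ := by rw [hFG]; ring
  · rw [Set.indicator_of_notMem hp]
    have := mul_aliasFactor_nonneg a b s r M (k, j)
    positivity

lemma tsum_indicator_aliasProd_le {r s : ℝ} (hr : 1 / 2 < r) (hs : 1 / 2 < s) {a b : ℤ → ℂ}
    (ha : InSobolev s a) (hb : InSobolev r b) {M : ℕ} (hM : 0 < M) :
    ∑' p, {p : ℤ × ℤ | p.2 ≠ 0 ∧ |p.1| ≤ |p.1 + p.2 * M|}.indicator (aliasProd a b M) p
      ≤ aliasConst r s * (M : ℝ) ^ (-r) * (sobolevNorm s a * sobolevNorm r b) := by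
  set S := {p : ℤ × ℤ | p.2 ≠ 0 ∧ |p.1| ≤ |p.1 + p.2 * M|}
  set F := aliasFactorLeft a s r
  set G := aliasFactorRight b s r M
  have hF := hasSum_aliasFactorLeft_sq hr ha
  obtain ⟨hG, hGle⟩ := summable_and_tsum_aliasFactorRight_sq_le (r := r) hs hb hM.ne'
  have hZr := one_le_sobolevWeightSum (t := 2 * r) (by linarith)
  have hZs := one_le_sobolevWeightSum (t := 2 * s) (by linarith)
  have hFG := tsum_mul_le_of_tsum_sq_le hF.summable hG
    (A := sobolevNorm s a * √(sobolevWeightSum (2 * r)))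
    (B := √(sobolevWeightSum (2 * s)) * sobolevNorm r b)
    (mul_nonneg (sobolevNorm_nonneg _ _) (Real.sqrt_nonneg _))
    (mul_nonneg (Real.sqrt_nonneg _) (sobolevNorm_nonneg _ _))
    (by rw [hF.tsum_eq, mul_pow, Real.sq_sqrt (by linarith)])
    (by rw [mul_pow, Real.sq_sqrt (by linarith)]; exact hGle)
  have hdom := indicator_aliasProd_le_mul_aliasFactor (show 0 ≤ r by linarith) s a b hM
  have hR : Summable fun p => 2 ^ r * (M : ℝ) ^ (-r) * (F p * G p) :=
    (summable_mul_of_summable_sq hF.summable hG).mul_left _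
  have hL : Summable (S.indicator (aliasProd a b M)) :=
    hR.of_nonneg_of_le (Set.indicator_nonneg fun p _ => aliasProd_nonneg a b M p) hdom
  calc ∑' p, S.indicator (aliasProd a b M) p
      ≤ ∑' p, 2 ^ r * (M : ℝ) ^ (-r) * (F p * G p) := hL.tsum_le_tsum hdom hR
    _ = 2 ^ r * (M : ℝ) ^ (-r) * ∑' p, F p * G p := tsum_mul_left
    _ ≤ 2 ^ r * (M : ℝ) ^ (-r) * ((sobolevNorm s a * √(sobolevWeightSum (2 * r)))
          * (√(sobolevWeightSum (2 * s)) * sobolevNorm r b)) := by gcongr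
    _ = aliasConst r s * (M : ℝ) ^ (-r) * (sobolevNorm s a * sobolevNorm r b) := by
        unfold aliasConst; ring

def aliasSwap (M : ℕ) : Equiv.Perm (ℤ × ℤ) :=
  Function.Involutive.toPerm (fun p => (p.1 + p.2 * M, -p.2)) fun p => by simp

lemma aliasSwap_apply (M : ℕ) (p : ℤ × ℤ) : aliasSwap M p = (p.1 + p.2 * M, -p.2) := rfl

lemma indicator_aliasProd_aliasSwap (a b : ℤ → ℂ) (M : ℕ) (q : ℤ × ℤ) :
    {p : ℤ × ℤ | p.2 ≠ 0 ∧ |p.1 + p.2 * M| ≤ |p.1|}.indicator (aliasProd a b M) (aliasSwap M q)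
      = {p : ℤ × ℤ | p.2 ≠ 0 ∧ |p.1| ≤ |p.1 + p.2 * M|}.indicator (aliasProd b a M) q := by
  obtain ⟨k, j⟩ := q
  simp only [aliasSwap_apply, Set.indicator_apply, Set.mem_ofPred_eq,
    neg_ne_zero, neg_mul, add_neg_cancel_right, aliasProd, mul_comm ‖a _‖]

lemma tsum_indicator_aliasProd_ne_zero_le {r s : ℝ} (hr : 1 / 2 < r) (hs : 1 / 2 < s)
    {a b : ℤ → ℂ} (har : InSobolev r a) (has : InSobolev s a) (hbr : InSobolev r b)
    (hbs : InSobolev s b) {M : ℕ} (hM : 0 < M) :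
    ∑' p, {p : ℤ × ℤ | p.2 ≠ 0}.indicator (aliasProd a b M) p
      ≤ aliasConst r s * (M : ℝ) ^ (-r)
        * (sobolevNorm r a * sobolevNorm s b + sobolevNorm s a * sobolevNorm r b) := by
  set S₁ := {p : ℤ × ℤ | p.2 ≠ 0 ∧ |p.1| ≤ |p.1 + p.2 * M|}
  set S₂ := {p : ℤ × ℤ | p.2 ≠ 0 ∧ |p.1 + p.2 * M| ≤ |p.1|}
  have hsum := summable_aliasProd (has.summable_norm hs) (hbs.summable_norm hs) hM.ne'
  have hsplit (p : ℤ × ℤ) : {p : ℤ × ℤ | p.2 ≠ 0}.indicator (aliasProd a b M) p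
      ≤ S₁.indicator (aliasProd a b M) p + S₂.indicator (aliasProd a b M) p := by
    have := aliasProd_nonneg a b M p
    have := le_total |p.1| |p.1 + p.2 * M|
    simp only [S₁, S₂, Set.indicator_apply, Set.mem_ofPred_eq]
    split_ifs <;> grind
  have hS₂ : ∑' p, S₂.indicator (aliasProd a b M) p
      ≤ aliasConst r s * (M : ℝ) ^ (-r) * (sobolevNorm s b * sobolevNorm r a) := by
    rw [← (aliasSwap M).tsum_eq]
    simp only [S₂, indicator_aliasProd_aliasSwap]
    exact tsum_indicator_aliasProd_le hr hs hbs har hM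
  calc ∑' p, {p : ℤ × ℤ | p.2 ≠ 0}.indicator (aliasProd a b M) p
      ≤ ∑' p, (S₁.indicator (aliasProd a b M) p + S₂.indicator (aliasProd a b M) p) :=
        (hsum.indicator _).tsum_le_tsum hsplit ((hsum.indicator _).add (hsum.indicator _))
    _ = ∑' p, S₁.indicator (aliasProd a b M) p + ∑' p, S₂.indicator (aliasProd a b M) p :=
        (hsum.indicator _).tsum_add (hsum.indicator _)
    _ ≤ aliasConst r s * (M : ℝ) ^ (-r) * (sobolevNorm s a * sobolevNorm r b)
        + aliasConst r s * (M : ℝ) ^ (-r) * (sobolevNorm s b * sobolevNorm r a) :=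
        add_le_add (tsum_indicator_aliasProd_le hr hs has hbr hM) hS₂
    _ = aliasConst r s * (M : ℝ) ^ (-r)
        * (sobolevNorm r a * sobolevNorm s b + sobolevNorm s a * sobolevNorm r b) := by ring

/-! ### Fourier series and the equispaced rule -/

def fourierMode (n : ℤ) (x : ℝ) : ℂ := exp (2 * Real.pi * I * n * x)

lemma fourierMode_eq_exp_ofReal_mul_I (n : ℤ) (x : ℝ) :
    fourierMode n x = exp ((2 * Real.pi * n * x : ℝ) * I) := by
  unfold fourierMode; push_cast; ring_nf

lemma norm_fourierMode (n : ℤ) (x : ℝ) : ‖fourierMode n x‖ = 1 := by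
  rw [fourierMode_eq_exp_ofReal_mul_I, norm_exp_ofReal_mul_I]

lemma conj_fourierMode (n : ℤ) (x : ℝ) : conj (fourierMode n x) = fourierMode (-n) x := by
  rw [fourierMode_eq_exp_ofReal_mul_I, ← exp_conj, map_mul, conj_ofReal, conj_I,
    fourierMode_eq_exp_ofReal_mul_I]
  push_cast; ring_nf

lemma fourierMode_add (m n : ℤ) (x : ℝ) :
    fourierMode (m + n) x = fourierMode m x * fourierMode n x := by
  unfold fourierMode; rw [← exp_add]; push_cast; ring_nf

lemma fourierMode_add_right (n : ℤ) (x y : ℝ) :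
    fourierMode n (x + y) = fourierMode n x * fourierMode n y := by
  unfold fourierMode; rw [← exp_add]; push_cast; ring_nf

lemma fourierMode_natCast_mul (n : ℤ) (m : ℕ) (x : ℝ) :
    fourierMode n (m * x) = fourierMode n x ^ m := by
  unfold fourierMode; rw [← exp_nat_mul]; push_cast; ring_nf

@[simp]
lemma fourierMode_zero (x : ℝ) : fourierMode 0 x = 1 := by simp [fourierMode]

lemma fourierMode_eq_one_iff (n : ℤ) (x : ℝ) :
    fourierMode n x = 1 ↔ ∃ k : ℤ, (n : ℝ) * x = k := by
  have h (k : ℤ) : 2 * Real.pi * I * n * x = k * (2 * Real.pi * I) ↔ (n : ℝ) * x = k := by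
    rw [← ofReal_intCast, ← ofReal_intCast k, ← ofReal_inj (z := n * x)]
    push_cast
    constructor
    · intro hk; exact mul_left_cancel₀ two_pi_I_ne_zero (by linear_combination hk)
    · intro hk; linear_combination (2 * Real.pi * I) * hk
  simp only [fourierMode, exp_eq_one_iff, h]

lemma continuous_fourierMode (n : ℤ) : Continuous (fourierMode n) := by
  unfold fourierMode; fun_prop

lemma integral_fourierMode (n : ℤ) :
    ∫ x in (0 : ℝ)..1, fourierMode n x = if n = 0 then 1 else 0 := by
  split_ifs with hn
  · simp [hn]
  have hc : 2 * Real.pi * I * n ≠ 0 := mul_ne_zero two_pi_I_ne_zero (by exact_mod_cast hn)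
  have hone : fourierMode n 1 = 1 := (fourierMode_eq_one_iff n 1).2 ⟨n, mul_one _⟩
  simp only [fourierMode, ofReal_one] at hone ⊢
  rw [integral_exp_mul_complex hc, ofReal_one, hone, ofReal_zero, mul_zero, exp_zero, sub_self,
    zero_div]

lemma sum_Icc_pow_eq_zero {K : Type*} [Field K] {ω : K} {M : ℕ} (hωM : ω ^ M = 1) (hω : ω ≠ 1) :
    ∑ m ∈ Finset.Icc 1 M, ω ^ m = 0 := by
  rw [← Finset.Ico_add_one_right_eq_Icc, Finset.sum_Ico_eq_sum_range, add_tsub_cancel_right]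
  simp_rw [pow_add, pow_one, ← Finset.mul_sum, geom_sum_eq hω, hωM, sub_self, zero_div, mul_zero]

lemma sum_fourierMode_equispaced (n : ℤ) {M : ℕ} (hM : M ≠ 0) (x : ℝ) :
    ∑ m ∈ Finset.Icc 1 M, fourierMode n (x + m / M)
      = if (M : ℤ) ∣ n then M * fourierMode n x else 0 := by
  set ω := fourierMode n (1 / M)
  have hM' : (M : ℝ) ≠ 0 := Nat.cast_ne_zero.2 hM
  have hterm (m : ℕ) : fourierMode n (x + m / M) = fourierMode n x * ω ^ m := by
    rw [fourierMode_add_right, ← fourierMode_natCast_mul, mul_one_div]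
  have hω : ω = 1 ↔ (M : ℤ) ∣ n := by
    rw [fourierMode_eq_one_iff]
    constructor
    · rintro ⟨k, hk⟩
      refine ⟨k, ?_⟩
      field_simp at hk
      have : (n : ℝ) = (M * k : ℤ) := by push_cast; linarith
      exact_mod_cast this
    · rintro ⟨k, rfl⟩
      exact ⟨k, by push_cast; field_simp⟩
  simp_rw [hterm, ← Finset.mul_sum]
  split_ifs with h
  · simp [hω.2 h, mul_comm]
  · have hωM : ω ^ M = 1 := by
      rw [← fourierMode_natCast_mul, mul_one_div_cancel hM']
      exact (fourierMode_eq_one_iff n 1).2 ⟨n, mul_one _⟩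
    rw [sum_Icc_pow_eq_zero hωM (mt hω.1 h), mul_zero]

def productTerm (a b : ℤ → ℂ) (x : ℝ) (p : ℤ × ℤ) : ℂ :=
  conj (a p.1) * b (p.1 + p.2) * fourierMode p.2 x

lemma norm_productTerm (a b : ℤ → ℂ) (x : ℝ) (p : ℤ × ℤ) :
    ‖productTerm a b x p‖ = ‖a p.1‖ * ‖b (p.1 + p.2)‖ := by
  simp [productTerm, norm_fourierMode]

lemma summable_norm_productTerm {a b : ℤ → ℂ} (ha : Summable fun k => ‖a k‖)
    (hb : Summable fun k => ‖b k‖) (x : ℝ) : Summable fun p => ‖productTerm a b x p‖ := by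
  have hprod := ha.mul_of_nonneg hb (fun _ => norm_nonneg _) fun _ => norm_nonneg _
  simp only [norm_productTerm]
  exact (Equiv.prodShear (Equiv.refl ℤ) Equiv.addLeft).summable_iff.2 hprod

lemma conj_tsum_mul_tsum {a b : ℤ → ℂ} (ha : Summable fun k => ‖a k‖)
    (hb : Summable fun k => ‖b k‖) (x : ℝ) :
    conj (∑' k, a k * fourierMode k x) * ∑' k, b k * fourierMode k x
      = ∑' p, productTerm a b x p := by
  have ha' : Summable fun k => ‖conj (a k * fourierMode k x)‖ := by
    simpa [norm_fourierMode] using ha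
  have hb' : Summable fun k => ‖b k * fourierMode k x‖ := by simpa [norm_fourierMode] using hb
  rw [conj_tsum, tsum_mul_tsum_of_summable_norm ha' hb',
    ← (Equiv.prodShear (Equiv.refl ℤ) Equiv.addLeft).tsum_eq]
  refine tsum_congr fun p => ?_
  have hinv : fourierMode (-p.1) x * fourierMode p.1 x = 1 := by
    rw [← fourierMode_add, neg_add_cancel, fourierMode_zero]
  simp only [Equiv.prodShear_apply, Equiv.refl_apply, Equiv.coe_addLeft, productTerm, map_mul,
    conj_fourierMode, fourierMode_add]
  linear_combination (conj (a p.1) * b (p.1 + p.2) * fourierMode p.2 x) * hinv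

lemma integral_conj_tsum_mul_tsum {a b : ℤ → ℂ} (ha : Summable fun k => ‖a k‖)
    (hb : Summable fun k => ‖b k‖) :
    ∫ x in (0 : ℝ)..1, conj (∑' k, a k * fourierMode k x) * ∑' k, b k * fourierMode k x
      = ∑' k, conj (a k) * b k := by
  simp_rw [conj_tsum_mul_tsum ha hb]
  have hcont (p : ℤ × ℤ) : Continuous fun x => productTerm a b x p :=
    continuous_const.mul (continuous_fourierMode _)
  rw [intervalIntegral.integral_of_le zero_le_one,
    ← MeasureTheory.integral_tsum_of_summable_integral_norm
      (fun p => (hcont p).integrableOn_Ioc) ?_]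
  · have hint (p : ℤ × ℤ) : ∫ x in Set.Ioc (0 : ℝ) 1, productTerm a b x p
        = {p : ℤ × ℤ | p.2 = 0}.indicator (fun p => conj (a p.1) * b (p.1 + p.2)) p := by
      rw [← intervalIntegral.integral_of_le zero_le_one]
      simp [productTerm, intervalIntegral.integral_const_mul, integral_fourierMode,
        Set.indicator_apply]
    simp_rw [hint, tsum_indicator_snd_eq, add_zero]
  · simpa [norm_productTerm] using summable_norm_productTerm ha hb 0

def aliasTerm (a b : ℤ → ℂ) (M : ℕ) (x : ℝ) (p : ℤ × ℤ) : ℂ := productTerm a b x (p.1, p.2 * M)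

lemma norm_aliasTerm (a b : ℤ → ℂ) (M : ℕ) (x : ℝ) (p : ℤ × ℤ) :
    ‖aliasTerm a b M x p‖ = aliasProd a b M p := by
  simp [aliasTerm, norm_productTerm, aliasProd]

lemma discrete_conj_tsum_mul_tsum {a b : ℤ → ℂ} (ha : Summable fun k => ‖a k‖)
    (hb : Summable fun k => ‖b k‖) {M : ℕ} (hM : M ≠ 0) (x : ℝ) :
    1 / (M : ℂ) * ∑ m ∈ Finset.Icc 1 M,
        conj (∑' k, a k * fourierMode k (x + m / M)) * ∑' k, b k * fourierMode k (x + m / M)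
      = ∑' p, aliasTerm a b M x p := by
  simp_rw [conj_tsum_mul_tsum ha hb]
  rw [← Summable.tsum_finsetSum fun m _ => (summable_norm_productTerm ha hb _).of_norm,
    ← tsum_mul_left]
  have hM' : (M : ℂ) ≠ 0 := Nat.cast_ne_zero.2 hM
  have hmean (p : ℤ × ℤ) : 1 / (M : ℂ) * ∑ m ∈ Finset.Icc 1 M, productTerm a b (x + m / M) p
      = if (M : ℤ) ∣ p.2 then productTerm a b x p else 0 := by
    simp only [productTerm]
    rw [← Finset.mul_sum, sum_fourierMode_equispaced _ hM]
    split_ifs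
    · field_simp
    · simp
  simp_rw [hmean]
  exact tsum_ite_dvd_snd (Int.natCast_ne_zero.2 hM) _

lemma tsum_aliasTerm_eq {a b : ℤ → ℂ} (ha : Summable fun k => ‖a k‖)
    (hb : Summable fun k => ‖b k‖) {M : ℕ} (hM : M ≠ 0) (x : ℝ) :
    ∑' p, aliasTerm a b M x p
      = ∑' k, conj (a k) * b k + ∑' p, {p : ℤ × ℤ | p.2 ≠ 0}.indicator (aliasTerm a b M x) p := by
  have hsum : Summable (aliasTerm a b M x) :=
    Summable.of_norm (by simpa [norm_aliasTerm] using summable_aliasProd ha hb hM)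
  set S := {p : ℤ × ℤ | p.2 ≠ 0}
  calc ∑' p, aliasTerm a b M x p = ∑' p, (Sᶜ.indicator (aliasTerm a b M x) p
        + S.indicator (aliasTerm a b M x) p) := by
        exact tsum_congr fun p => (congr_fun (Set.indicator_compl_add_self S _) p).symm
    _ = ∑' p, Sᶜ.indicator (aliasTerm a b M x) p + ∑' p, S.indicator (aliasTerm a b M x) p :=
        (hsum.indicator _).tsum_add (hsum.indicator _)
    _ = ∑' k, conj (a k) * b k + ∑' p, S.indicator (aliasTerm a b M x) p := by
        simp [S, Set.compl_ofPred, tsum_indicator_snd_eq, aliasTerm, productTerm]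

lemma norm_tsum_indicator_aliasTerm_le {a b : ℤ → ℂ} (ha : Summable fun k => ‖a k‖)
    (hb : Summable fun k => ‖b k‖) {M : ℕ} (hM : M ≠ 0) (x : ℝ) (S : Set (ℤ × ℤ)) :
    ‖∑' p, S.indicator (aliasTerm a b M x) p‖ ≤ ∑' p, S.indicator (aliasProd a b M) p := by
  have hnorm : (fun p => ‖aliasTerm a b M x p‖) = aliasProd a b M :=
    funext (norm_aliasTerm a b M x)
  calc ‖∑' p, S.indicator (aliasTerm a b M x) p‖ ≤ ∑' p, ‖S.indicator (aliasTerm a b M x) p‖ :=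
        norm_tsum_le_tsum_norm (by
          simpa only [norm_indicator_eq_indicator_norm, hnorm] using
            (summable_aliasProd ha hb hM).indicator S)
    _ = ∑' p, S.indicator (aliasProd a b M) p := by
        simp only [norm_indicator_eq_indicator_norm, hnorm]

end

/-- for `r > s > 1/2` there exists `C_{r,s} > 0`, independent of `f, g, M`
(and of the offset `x̃`), such that for all 1-periodic `f, g ∈ H^r`, the equispaced
discrete inner product `⟨f,g⟩_M = (1/M) ∑_{m=1}^M conj(f(x̃+m/M)) g(x̃+m/M)` satisfies
`|⟨f,g⟩ − ⟨f,g⟩_M| ≤ C M^{-r} (‖f‖_r ‖g‖_s + ‖f‖_s ‖g‖_r)`. -/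
theorem discrete_inner_product_error_equispaced (r s : ℝ) (hs : 1 / 2 < s) (hrs : s < r) :
    ∃ C : ℝ, 0 < C ∧ ∀ (M : ℕ), 0 < M → ∀ (xt : ℝ), xt ∈ Set.Ico (0:ℝ) 1 →
      ∀ (f g : ℝ → ℂ) (cf cg : ℤ → ℂ),
      (∀ x : ℝ, f (x + 1) = f x) → (∀ x : ℝ, g (x + 1) = g x) →
      InSobolev r cf → InSobolev r cg →
      (∀ x : ℝ, f x = ∑' k : ℤ, cf k * Complex.exp (2 * Real.pi * Complex.I * k * x)) →
      (∀ x : ℝ, g x = ∑' k : ℤ, cg k * Complex.exp (2 * Real.pi * Complex.I * k * x)) →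
      ‖(∫ x in (0:ℝ)..1, (starRingEnd ℂ) (f x) * g x)
          - (1 / (M:ℂ)) * ∑ m ∈ Finset.Icc 1 M,
              (starRingEnd ℂ) (f (xt + (m:ℝ) / M)) * g (xt + (m:ℝ) / M)‖
        ≤ C * (M:ℝ) ^ (-r) * (sobolevNorm r cf * sobolevNorm s cg
            + sobolevNorm s cf * sobolevNorm r cg) := by
  have hr : 1 / 2 < r := hs.trans hrs
  refine ⟨aliasConst r s, aliasConst_pos hr hs,
    fun M hM xt _ f g cf cg _ _ hcf hcg hf hg => ?_⟩
  have hcf₁ := hcf.summable_norm hr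
  have hcg₁ := hcg.summable_norm hr
  have hf' : ∀ x, f x = ∑' k, cf k * fourierMode k x := hf
  have hg' : ∀ x, g x = ∑' k, cg k * fourierMode k x := hg
  simp only [hf', hg']
  rw [integral_conj_tsum_mul_tsum hcf₁ hcg₁, discrete_conj_tsum_mul_tsum hcf₁ hcg₁ hM.ne',
    tsum_aliasTerm_eq hcf₁ hcg₁ hM.ne', sub_add_cancel_left, norm_neg]
  exact (norm_tsum_indicator_aliasTerm_le hcf₁ hcg₁ hM.ne' xt _).trans
    (tsum_indicator_aliasProd_ne_zero_le hr hs hcf (hcf.mono hrs.le) hcg (hcg.mono hrs.le) hM)
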